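/- arXiv:1110.0286 — 6 statements merged into one kernel-verified Lean document; each statement's English description precedes it below -/
import Mathlib

section
/- For every f ∈ R[[v]] and every k ≥ 1, writing H_k(f) = Σ_{n≥0} κ_n v^n with κ_n ∈ R, the polynomial B_k(t) divides κ_n in R for every n ≥ 0. -/
open Polynomial

/-- The `𝔽_q`-algebra endomorphism of `R = 𝔽_q[t,θ]` (realised as `(𝔽_q[θ])[t]`, with `t` the
outer variable `X` and `θ` the inner variable `C X`) sending `t ↦ t^{q^a}` and `θ ↦ θ^{q^b}`. -/
noncomputable def subst (F : Type) [Field F] (q a b : ℕ) :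
    Polynomial (Polynomial F) →+* Polynomial (Polynomial F) :=
  eval₂RingHom (C.comp (Polynomial.aeval ((X : Polynomial F) ^ q ^ b)).toRingHom)
    ((X : Polynomial (Polynomial F)) ^ q ^ a)

/-- The operator `τ` on `R[[v]]`: `τ(Σ c_s v^s) = Σ c_s(t, θ^q) v^{qs}`. -/
noncomputable def tauP (F : Type) [Field F] (q : ℕ) :
    PowerSeries (Polynomial (Polynomial F)) → PowerSeries (Polynomial (Polynomial F)) :=
  fun f => PowerSeries.mk fun n =>
    if q ∣ n then subst F q 0 1 (PowerSeries.coeff (n / q) f) else 0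

/-- The operator `χ` on `R[[v]]`: `χ(Σ c_s v^s) = Σ c_s(t^q, θ) v^s`. -/
noncomputable def chiP (F : Type) [Field F] (q : ℕ) :
    PowerSeries (Polynomial (Polynomial F)) → PowerSeries (Polynomial (Polynomial F)) :=
  fun f => PowerSeries.mk fun n => subst F q 1 0 (PowerSeries.coeff n f)

/-!
Row `i` of the matrix is obtained from the row of `f, τ f, …, τ^{k-1} f` by the substitution
`t ↦ t^{q^i}`. Replacing `t^{q^i}` by an independent variable `X_i` gives a generic determinant
over `𝔽_q[θ][X_0, X_1, …]` whose coefficients vanish under `X_j ↦ X_i` (two equal rows), hence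
are divisible by the generic Vandermonde product `∏_{i<j} (X_j - X_i)`; specialising
`X_i ↦ t^{q^i}` gives the divisibility by `B_k(t)`.
-/

namespace MvPolynomial

variable {S σ : Type*} [CommRing S]

lemma X_sub_X_dvd_sub_bind₁_update [DecidableEq σ] (i j : σ) (P : MvPolynomial σ S) :
    (X j - X i : MvPolynomial σ S) ∣
      P - bind₁ (Function.update (X : σ → MvPolynomial σ S) j (X i)) P := by
  rw [← Ideal.mem_span_singleton, ← Ideal.Quotient.eq]
  have hcomp : (Ideal.Quotient.mk _).comp
      (bind₁ (Function.update (X : σ → MvPolynomial σ S) j (X i))).toRingHom =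
        Ideal.Quotient.mk (Ideal.span {(X j - X i : MvPolynomial σ S)}) := by
    refine ringHom_ext (fun c => by simp) fun l => ?_
    by_cases hl : l = j
    · subst hl
      simp only [RingHom.comp_apply, AlgHom.toRingHom_eq_coe, RingHom.coe_coe, bind₁_X_right,
        Function.update_self, Ideal.Quotient.eq, Ideal.mem_span_singleton]
      exact ⟨-1, by ring⟩
    · simp [hl]
  exact (RingHom.congr_fun hcomp P).symm

lemma bind₁_update_X_sub_X_ne_zero [Nontrivial S] [LinearOrder σ] {x y : σ × σ}
    (hx : x.2 < x.1) (hy : y.2 < y.1) (hxy : x ≠ y) :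
    bind₁ (Function.update (X : σ → MvPolynomial σ S) x.1 (X x.2)) (X y.1 - X y.2) ≠ 0 := by
  have X_sub_X_ne_zero : ∀ a b : σ, a ≠ b → (X a - X b : MvPolynomial σ S) ≠ 0 :=
    fun a b hab => sub_ne_zero.mpr fun h => hab (X_injective h)
  simp only [map_sub, bind₁_X_right, Function.update_apply]
  by_cases h1 : y.1 = x.1
  · rw [if_pos h1, if_neg (h1 ▸ hy).ne]
    exact X_sub_X_ne_zero _ _ fun h => hxy (Prod.ext h1.symm h)
  · rw [if_neg h1]
    split_ifs with h2
    · exact X_sub_X_ne_zero _ _ (hx.trans (h2 ▸ hy)).ne'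
    · exact X_sub_X_ne_zero _ _ hy.ne'

lemma prod_X_sub_X_dvd_of_bind₁_update_eq_zero [IsDomain S] [LinearOrder σ]
    (T : Finset (σ × σ)) (hT : ∀ x ∈ T, x.2 < x.1) (P : MvPolynomial σ S)
    (hP : ∀ x ∈ T, bind₁ (Function.update (X : σ → MvPolynomial σ S) x.1 (X x.2)) P = 0) :
    ∏ x ∈ T, (X x.1 - X x.2 : MvPolynomial σ S) ∣ P := by
  induction T using Finset.induction_on generalizing P with
  | empty => simp
  | @insert y T hy ih =>
    obtain ⟨W, rfl⟩ : (X y.1 - X y.2 : MvPolynomial σ S) ∣ P := by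
      simpa [hP y (T.mem_insert_self y)] using X_sub_X_dvd_sub_bind₁_update y.2 y.1 P
    rw [Finset.prod_insert hy]
    refine mul_dvd_mul_left _ (ih (fun x hx => hT x (T.mem_insert_of_mem hx)) W fun x hx => ?_)
    have hxW := hP x (T.mem_insert_of_mem hx)
    rw [map_mul] at hxW
    exact (mul_eq_zero.mp hxW).resolve_left <| bind₁_update_X_sub_X_ne_zero
      (hT x (T.mem_insert_of_mem hx)) (hT y (T.mem_insert_self y)) (ne_of_mem_of_not_mem hx hy)

end MvPolynomial

def orderedPairs (k : ℕ) : Finset (ℕ × ℕ) :=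
  (Finset.range k ×ˢ Finset.range k).filter fun y => y.2 < y.1

lemma mem_orderedPairs {k : ℕ} {y : ℕ × ℕ} : y ∈ orderedPairs k ↔ y.1 < k ∧ y.2 < y.1 := by
  simp only [orderedPairs, Finset.mem_filter, Finset.mem_product, Finset.mem_range]
  omega

lemma prod_orderedPairs {M : Type*} [CommMonoid M] (k : ℕ) (f : ℕ → ℕ → M) :
    ∏ y ∈ orderedPairs k, f y.1 y.2 = ∏ j ∈ Finset.range k, ∏ i ∈ Finset.range j, f j i :=
  Finset.prod_finset_product' _ _ _ fun _ => by simp [mem_orderedPairs]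

section GenericVandermonde

open MvPolynomial

variable {A : Type*} [CommRing A]

lemma bind₁_update_comp_eval₂RingHom_X {σ : Type*} [DecidableEq σ] (i j r : σ) :
    (bind₁ (Function.update (X : σ → MvPolynomial σ A) j (X i))).toRingHom.comp
        (eval₂RingHom MvPolynomial.C (X r)) =
      eval₂RingHom MvPolynomial.C (X (if r = j then i else r)) :=
  Polynomial.ringHom_ext (by simp) (by by_cases hr : r = j <;> simp [hr])

lemma map_bind₁_update_det_eq_zero {k : ℕ} (g : Fin k → PowerSeries A[X]) {i j : Fin k}
    (hij : i ≠ j) :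
    PowerSeries.map (bind₁ (Function.update (X : ℕ → MvPolynomial ℕ A) j (X i))).toRingHom
      (Matrix.of fun r l : Fin k =>
        PowerSeries.map (eval₂RingHom MvPolynomial.C (X (r : ℕ))) (g l)).det = 0 := by
  rw [RingHom.map_det]
  refine Matrix.det_zero_of_row_eq hij (funext fun l => ?_)
  simp only [RingHom.mapMatrix_apply, Matrix.map_apply, Matrix.of_apply, ← RingHom.comp_apply,
    ← PowerSeries.map_comp, bind₁_update_comp_eval₂RingHom_X, Fin.val_inj, hij, if_true, if_false]

lemma prod_X_sub_X_dvd_coeff_det [IsDomain A] {k : ℕ} (g : Fin k → PowerSeries A[X]) (n : ℕ) :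
    ∏ y ∈ orderedPairs k, (X y.1 - X y.2 : MvPolynomial ℕ A) ∣ PowerSeries.coeff n
      (Matrix.of fun r l : Fin k =>
        PowerSeries.map (eval₂RingHom MvPolynomial.C (X (r : ℕ))) (g l)).det := by
  refine prod_X_sub_X_dvd_of_bind₁_update_eq_zero _ (fun y hy => (mem_orderedPairs.mp hy).2) _
    fun y hy => ?_
  obtain ⟨hj, hi⟩ := mem_orderedPairs.mp hy
  have := map_bind₁_update_det_eq_zero g (i := ⟨y.2, hi.trans hj⟩) (j := ⟨y.1, hj⟩)
    (Fin.ne_of_val_ne hi.ne)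
  rw [← AlgHom.coe_toRingHom, ← PowerSeries.coeff_map]
  exact (congrArg _ this).trans (map_zero _)

theorem prod_sub_dvd_coeff_det_map_eval₂ [IsDomain A] {B : Type*} [CommRing B]
    (φ : A →+* B) (x : ℕ → B) (k : ℕ) (g : Fin k → PowerSeries A[X]) (n : ℕ) :
    (∏ j ∈ Finset.range k, ∏ i ∈ Finset.range j, (x j - x i)) ∣
      PowerSeries.coeff n (Matrix.of fun i j : Fin k =>
        PowerSeries.map (eval₂RingHom φ (x i)) (g j)).det := by
  have hspec : (Matrix.of fun i j : Fin k => PowerSeries.map (eval₂RingHom φ (x i)) (g j)) =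
      (Matrix.of fun i j : Fin k =>
        PowerSeries.map (eval₂RingHom MvPolynomial.C (X (i : ℕ))) (g j)).map
          (PowerSeries.map (eval₂Hom φ x)) := by
    ext1 i j
    have : eval₂RingHom φ (x i) = (eval₂Hom φ x).comp (eval₂RingHom MvPolynomial.C (X i)) :=
      Polynomial.ringHom_ext (by simp) (by simp)
    simp [this, PowerSeries.map_comp]
  have := map_dvd (eval₂Hom φ x) (prod_X_sub_X_dvd_coeff_det g n)
  rwa [map_prod, ← PowerSeries.coeff_map, RingHom.map_det, RingHom.mapMatrix_apply, ← hspec,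
    Finset.prod_congr rfl fun y _ => by rw [map_sub, eval₂Hom_X', eval₂Hom_X'],
    prod_orderedPairs k fun j i => x j - x i] at this

end GenericVandermonde

lemma chiP_iterate_eq_map (F : Type) [Field F] (q i : ℕ)
    (g : PowerSeries (Polynomial (Polynomial F))) :
    (chiP F q)^[i] g = PowerSeries.map (eval₂RingHom C (X ^ q ^ i)) g := by
  induction i generalizing g with
  | zero => ext n; simp [PowerSeries.coeff_map]
  | succ i ih =>
    have hsubst : (subst F q 1 0).comp (eval₂RingHom C (X ^ q ^ i)) =
        eval₂RingHom C (X ^ q ^ (i + 1)) :=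
      Polynomial.ringHom_ext (by simp [subst]) (by simp [subst, ← pow_mul, pow_succ'])
    rw [Function.iterate_succ_apply', ih, ← hsubst]
    ext n
    simp [chiP, PowerSeries.coeff_map]

theorem Bk_dvd_hankel_coeffs_general
    {q : ℕ}
    (F : Type) [Field F]
    (k : ℕ) (f : PowerSeries (Polynomial (Polynomial F))) :
    ∀ n : ℕ,
      (∏ j ∈ Finset.range k, ∏ i ∈ Finset.range j,
          ((X : Polynomial (Polynomial F)) ^ q ^ j - X ^ q ^ i)) ∣
        PowerSeries.coeff n
          (Matrix.det (Matrix.of fun i j : Fin k =>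
            (chiP F q)^[(i : ℕ)] ((tauP F q)^[(j : ℕ)] f))) := by
  intro n
  simp only [chiP_iterate_eq_map]
  exact prod_sub_dvd_coeff_det_map_eval₂ C (fun i => X ^ q ^ i) k (fun j => (tauP F q)^[j] f) n

/-- For every `f ∈ R[[v]]` and every `k ≥ 1`, all the coefficients `κ_n`
of `H_k(f) = det((χ^{i−1}τ^{j−1} f)_{1≤i,j≤k})` are divisible in `R` by
`B_k(t) = ∏_{0 ≤ i < j ≤ k−1} (t^{q^j} − t^{q^i})`. -/
theorem Bk_dvd_hankel_coeffs
    {p : ℕ} (hp : p.Prime) {e : ℕ} (he : 1 ≤ e) {q : ℕ} (hq : q = p ^ e)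
    (F : Type) [Field F] [Fintype F] (hF : Fintype.card F = q)
    (k : ℕ) (hk : 1 ≤ k) (f : PowerSeries (Polynomial (Polynomial F))) :
    ∀ n : ℕ,
      (∏ j ∈ Finset.range k, ∏ i ∈ Finset.range j,
          ((X : Polynomial (Polynomial F)) ^ q ^ j - X ^ q ^ i)) ∣
        PowerSeries.coeff n
          (Matrix.det (Matrix.of fun i j : Fin k =>
            (chiP F q)^[(i : ℕ)] ((tauP F q)^[(j : ℕ)] f))) :=
  Bk_dvd_hankel_coeffs_general F k f
end

section
/- For every k ≥ 1 and any polynomials c_1, …, c_k ∈ R, the polynomial B_k(t) divides the determinant det((c_j(t^{q^{i−1}}, θ^{q^{j−1}}))_{1≤i,j≤k}) in R. -/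
/-!
Reducing each `d_j` modulo `∏ᵢ (X - xᵢ)` does not change its values at the points `xᵢ` and leaves
a polynomial of degree `< k`, so `(d_j(xᵢ))ᵢⱼ` factors as the Vandermonde matrix of the `xᵢ` times
the `k × k` matrix of coefficients of these remainders. Hence, over any commutative ring, the
Vandermonde determinant `∏_{i<j} (xⱼ - xᵢ)` divides `det (d_j(xᵢ))`. The twisted determinant is of
this form with `xᵢ = t^{q^i}` and `d_j = c_j(t, θ^{q^j})`.
-/

open Polynomial

namespace Polynomial

variable {R : Type*} [CommRing R] {k : ℕ}

theorem eval_modByMonic_prod_X_sub_C (x : Fin k → R) (p : R[X]) (i : Fin k) :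
    (p %ₘ ∏ j, (X - C (x j))).eval (x i) = p.eval (x i) :=
  eval₂_modByMonic_eq_self_of_root <| by
    simp [eval₂_finsetProd, Finset.prod_eq_zero (Finset.mem_univ i)]

theorem natDegree_modByMonic_prod_X_sub_C_lt (hk : 0 < k) (x : Fin k → R) (p : R[X]) :
    (p %ₘ ∏ j, (X - C (x j))).natDegree < k := by
  rcases subsingleton_or_nontrivial R with hR | hR
  · simpa [Subsingleton.elim (p %ₘ _) 0] using hk
  have hdeg : (∏ j, (X - C (x j))).natDegree = k := by simp
  have hne : ∏ j, (X - C (x j)) ≠ 1 := fun h => by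
    rw [h, natDegree_one] at hdeg
    omega
  calc _ < _ := natDegree_modByMonic_lt p (monic_prod_X_sub_C x _) hne
    _ = k := hdeg

end Polynomial

namespace Matrix

variable {R : Type*} [CommRing R] {k : ℕ}

theorem of_eval_eq_vandermonde_mul (x : Fin k → R) (d : Fin k → R[X]) :
    of (fun i j => (d j).eval (x i)) =
      vandermonde x * of (fun (m j : Fin k) => (d j %ₘ ∏ i, (X - C (x i))).coeff m) := by
  ext i j
  rw [of_apply, ← eval_modByMonic_prod_X_sub_C x,
    eval_eq_sum_range' (natDegree_modByMonic_prod_X_sub_C_lt i.pos x (d j)), mul_apply,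
    ← Fin.sum_univ_eq_sum_range]
  simp [vandermonde_apply, mul_comm]

theorem det_vandermonde_dvd_det_of_eval (x : Fin k → R) (d : Fin k → R[X]) :
    det (vandermonde x) ∣ det (of fun i j => (d j).eval (x i)) :=
  Dvd.intro _ (by rw [of_eval_eq_vandermonde_mul, det_mul])

end Matrix

theorem Fin.prod_prod_Ioi_eq_prod_range {M : Type*} [CommMonoid M] (k : ℕ) (f : ℕ → ℕ → M) :
    ∏ i : Fin k, ∏ j ∈ Finset.Ioi i, f i j = ∏ j ∈ Finset.range k, ∏ i ∈ Finset.range j, f i j := by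
  have hIoi (i : Fin k) : ∏ j ∈ Finset.Ioi i, f i j = ∏ j ∈ Finset.Ioo (i : ℕ) k, f i j := by
    rw [← Fin.map_valEmbedding_Ioi, Finset.prod_map]; rfl
  simp_rw [hIoi]
  rw [Fin.prod_univ_eq_prod_range (fun i => ∏ j ∈ Finset.Ioo i k, f i j)]
  refine Finset.prod_comm' fun i j => ?_
  simp only [Finset.mem_range, Finset.mem_Ioo]
  omega

theorem subst_apply (F : Type) [Field F] (q a b : ℕ) (P : Polynomial (Polynomial F)) :
    subst F q a b P =
      (P.map (C.comp (aeval ((X : Polynomial F) ^ q ^ b)).toRingHom)).eval (X ^ q ^ a) :=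
  (eval_map _ _).symm

theorem Bk_dvd_twisted_det_general
    {q : ℕ}
    (F : Type) [Field F]
    (k : ℕ) (c : Fin k → Polynomial (Polynomial F)) :
    (∏ j ∈ Finset.range k, ∏ i ∈ Finset.range j,
        ((X : Polynomial (Polynomial F)) ^ q ^ j - X ^ q ^ i)) ∣
      Matrix.det (Matrix.of fun i j : Fin k => subst F q (i : ℕ) (j : ℕ) (c j)) := by
  simp_rw [subst_apply]
  rw [← Fin.prod_prod_Ioi_eq_prod_range k fun i j => X ^ q ^ j - X ^ q ^ i,
    ← Matrix.det_vandermonde fun i => X ^ q ^ (i : ℕ)]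
  exact Matrix.det_vandermonde_dvd_det_of_eval _ _

/-- For any polynomials `c_1,…,c_k ∈ R = 𝔽_q[t,θ]`, the polynomial
`B_k(t) = ∏_{0 ≤ i < j ≤ k−1} (t^{q^j} − t^{q^i})` divides the determinant
`det((c_j(t^{q^{i−1}}, θ^{q^{j−1}}))_{1≤i,j≤k})` in `R`. -/
theorem Bk_dvd_twisted_det
    {p : ℕ} (hp : p.Prime) {e : ℕ} (he : 1 ≤ e) {q : ℕ} (hq : q = p ^ e)
    (F : Type) [Field F] [Fintype F] (hF : Fintype.card F = q)
    (k : ℕ) (hk : 1 ≤ k) (c : Fin k → Polynomial (Polynomial F)) :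
    (∏ j ∈ Finset.range k, ∏ i ∈ Finset.range j,
        ((X : Polynomial (Polynomial F)) ^ q ^ j - X ^ q ^ i)) ∣
      Matrix.det (Matrix.of fun i j : Fin k => subst F q (i : ℕ) (j : ℕ) (c j)) :=
  Bk_dvd_twisted_det_general F k c
end

section
/- For every k ≥ 1 and every choice of non-negative integers ν_1,…,ν_k, the polynomial B_k(t) divides the determinant M(ν_1,…,ν_k) = det((t^{ν_j q^{i−1}})_{1≤i,j≤k}) in 𝔽_q[t]. -/
/-!
Over the universal ring `ℤ[x₀, …, x_{k-1}]`, the generalized Vandermonde determinant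
`det (x_s ^ ν_t)` is killed by the substitution `x_j ↦ x_i` (two rows become equal), so it is
divisible by `x_j - x_i`, which generates the kernel of that substitution. As the target of the
substitution is a domain, these linear forms are pairwise non-associated primes, hence their
product, the Vandermonde determinant, divides `det (x_s ^ ν_t)`. Specializing `x_s ↦ t ^ q ^ s`
turns the Vandermonde determinant into `B_k(t)` and `det (x_s ^ ν_t)` into `M(ν₁, …, ν_k)`.
-/

open Polynomial

namespace MvPolynomial

variable {σ R : Type*} [CommRing R]

theorem ker_rename_update_eq_span_X_sub_X [DecidableEq σ] {i j : σ} (hij : i ≠ j) :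
    RingHom.ker (rename (R := R) (Function.update id j i)) = Ideal.span {X j - X i} := by
  set I : Ideal (MvPolynomial σ R) := Ideal.span {X j - X i}
  refine le_antisymm (fun f hf => ?_) ?_
  · have hcomp : (Ideal.Quotient.mkₐ R I).comp (rename (Function.update id j i)) =
        Ideal.Quotient.mkₐ R I := by
      refine algHom_ext fun n => ?_
      rcases eq_or_ne n j with rfl | hn
      · simp only [AlgHom.comp_apply, rename_X, Function.update_self, Ideal.Quotient.mkₐ_eq_mk,
          Ideal.Quotient.eq]
        exact Ideal.mem_span_singleton.2 ⟨-1, by ring⟩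
      · simp [hn]
    rw [← Ideal.Quotient.eq_zero_iff_mem, ← Ideal.Quotient.mkₐ_eq_mk R, ← hcomp,
      AlgHom.comp_apply, RingHom.mem_ker.1 hf, map_zero]
  · rw [Ideal.span_le, Set.singleton_subset_iff]
    simp [hij]

theorem X_sub_X_dvd_iff [DecidableEq σ] {i j : σ} (hij : i ≠ j) {f : MvPolynomial σ R} :
    X j - X i ∣ f ↔ rename (Function.update id j i) f = 0 := by
  rw [← Ideal.mem_span_singleton, ← ker_rename_update_eq_span_X_sub_X hij, RingHom.mem_ker]

theorem prime_X_sub_X [IsDomain R] {i j : σ} (hij : i ≠ j) :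
    Prime (X j - X i : MvPolynomial σ R) := by
  classical
  exact (Ideal.span_singleton_prime (sub_ne_zero.2 ((X_injective (R := R)).ne hij.symm))).1 <|
    ker_rename_update_eq_span_X_sub_X (R := R) hij ▸ RingHom.ker_isPrime _

theorem eq_of_X_sub_X_dvd [Nontrivial R] [LinearOrder σ] {i j i' j' : σ} (hij : i < j)
    (hij' : i' < j') (h : X j - X i ∣ (X j' - X i' : MvPolynomial σ R)) : i = i' ∧ j = j' := by
  rw [X_sub_X_dvd_iff hij.ne, map_sub, rename_X, rename_X, sub_eq_zero,
    (X_injective (σ := σ) (R := R)).eq_iff] at h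
  simp only [Function.update_apply, id] at h
  split_ifs at h <;> grind

theorem X_sub_X_dvd_det_of_X_pow [DecidableEq σ] [Fintype σ] (ν : σ → ℕ) {i j : σ}
    (hij : i ≠ j) : X j - X i ∣ (Matrix.of fun s t => (X s : MvPolynomial σ R) ^ ν t).det := by
  rw [X_sub_X_dvd_iff hij, AlgHom.map_det]
  refine Matrix.det_zero_of_row_eq hij.symm ?_
  ext t
  simp [hij]

end MvPolynomial

namespace Matrix

open MvPolynomial Finset

theorem det_vandermonde_X_dvd_det_X_pow {R : Type*} [CommRing R] [IsDomain R]
    [UniqueFactorizationMonoid R] {n : ℕ} (ν : Fin n → ℕ) :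
    (vandermonde (X : Fin n → MvPolynomial (Fin n) R)).det ∣ (of fun s t => X s ^ ν t).det := by
  rw [det_vandermonde, prod_sigma']
  refine prod_dvd_of_isRelPrime ?_ fun ⟨i, j⟩ hij => ?_
  · rintro ⟨i, j⟩ hij ⟨i', j'⟩ hij' hne
    simp only [coe_sigma, Set.mem_sigma_iff, coe_univ, Set.mem_univ, coe_Ioi, Set.mem_Ioi,
      true_and] at hij hij'
    refine ((prime_X_sub_X hij.ne).irreducible.isRelPrime_iff_not_dvd).2 fun h => hne ?_
    obtain ⟨rfl, rfl⟩ := eq_of_X_sub_X_dvd hij hij' h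
    rfl
  · simp only [mem_sigma, mem_univ, mem_Ioi, true_and] at hij
    exact X_sub_X_dvd_det_of_X_pow ν hij.ne

theorem det_vandermonde_dvd_det_pow {S : Type*} [CommRing S] {n : ℕ} (v : Fin n → S)
    (ν : Fin n → ℕ) : (vandermonde v).det ∣ (of fun s t => v s ^ ν t).det := by
  have h := map_dvd (MvPolynomial.aeval (R := ℤ) v) (det_vandermonde_X_dvd_det_X_pow ν)
  rw [AlgHom.map_det, AlgHom.map_det] at h
  convert h <;> ext <;> simp [vandermonde_apply]

end Matrix

theorem prod_range_prod_range_eq_prod_Ioi {M : Type*} [CommMonoid M] (k : ℕ) (f : ℕ → ℕ → M) :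
    ∏ j ∈ Finset.range k, ∏ i ∈ Finset.range j, f j i =
      ∏ i : Fin k, ∏ j ∈ Finset.Ioi i, f j i := by
  have hIoi (i : Fin k) : ∏ j ∈ Finset.Ioi i, f j i = ∏ j ∈ Finset.Ioo (i : ℕ) k, f j i := by
    rw [← Fin.map_valEmbedding_Ioi, Finset.prod_map]
    rfl
  simp_rw [hIoi]
  rw [Fin.prod_univ_eq_prod_range (fun i => ∏ j ∈ Finset.Ioo i k, f j i)]
  exact Finset.prod_comm' fun j i => by simp only [Finset.mem_range, Finset.mem_Ioo]; omega

theorem Bk_dvd_moore_det_general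
    {q : ℕ}
    (F : Type) [Field F]
    (k : ℕ) (ν : Fin k → ℕ) :
    (∏ j ∈ Finset.range k, ∏ i ∈ Finset.range j,
        ((X : Polynomial F) ^ q ^ j - X ^ q ^ i)) ∣
      Matrix.det (Matrix.of fun i j : Fin k =>
        (X : Polynomial F) ^ (ν j * q ^ (i : ℕ))) := by
  rw [prod_range_prod_range_eq_prod_Ioi, ← Matrix.det_vandermonde]
  convert Matrix.det_vandermonde_dvd_det_pow (fun i : Fin k => (X : F[X]) ^ q ^ (i : ℕ)) ν using 3
  ext i j
  simp [← pow_mul, mul_comm]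

/-- For any non-negative integers `ν_1,…,ν_k`, the polynomial
`B_k(t) = ∏_{0 ≤ i < j ≤ k−1} (t^{q^j} − t^{q^i})` divides the Moore-type determinant
`M(ν_1,…,ν_k) = det((t^{ν_j q^{i−1}})_{1≤i,j≤k})` in `𝔽_q[t]`. -/
theorem Bk_dvd_moore_det
    {p : ℕ} (hp : p.Prime) {e : ℕ} (he : 1 ≤ e) {q : ℕ} (hq : q = p ^ e)
    (F : Type) [Field F] [Fintype F] (hF : Fintype.card F = q)
    (k : ℕ) (hk : 1 ≤ k) (ν : Fin k → ℕ) :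
    (∏ j ∈ Finset.range k, ∏ i ∈ Finset.range j,
        ((X : Polynomial F) ^ q ^ j - X ^ q ^ i)) ∣
      Matrix.det (Matrix.of fun i j : Fin k =>
        (X : Polynomial F) ^ (ν j * q ^ (i : ℕ))) :=
  Bk_dvd_moore_det_general F k ν
end

section
/- For all integers s ≥ 0 and l ≥ 0 satisfying s < 1 + q² + ⋯ + q^{2l} (equivalently, s < (q^{2l+2} − 1)/(q² − 1)), the degree in t of the polynomial c_s is at most l. -/
/-!
Induction on `s`, with `S_l = 1 + q² + ⋯ + q^{2l}` satisfying `S_{l+1} = q² S_l + 1`. In the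
recursion for `c_s` every `c_j` that occurs has `j < s` (as `q = |𝔽_q| ≥ 2`), and the
substitutions `θ ↦ θ^{q^b}` do not change the degree in `t`. A term `γ_i c_j(t, θ^q)` has
`j ≤ s < S_{l+1}`, so degree `≤ l + 1`. A term `δ_i c_j(t, θ^{q²})` only matters for `i ≥ 1`
(as `δ_0 = 0`), and then `q² j < s < q² S_l + 1` forces `j < S_l`: degree `≤ l`, which the
factor `t − θ^q` raises by at most one.
-/

open Polynomial

open Finset

lemma natDegree_subst_zero_le (F : Type) [Field F] (q b : ℕ) (P : Polynomial (Polynomial F)) :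
    (subst F q 0 b P).natDegree ≤ P.natDegree := by
  have hmap : subst F q 0 b P = P.map (aeval ((X : Polynomial F) ^ q ^ b)).toRingHom := by
    simp only [subst, coe_eval₂RingHom, pow_zero, pow_one]
    rfl
  exact hmap ▸ natDegree_map_le

lemma natDegree_sum_ite_C_mul_le {R : Type*} [Semiring R] {a : ℕ → R} {f : ℕ → R[X]}
    {s k n : ℕ} (h : ∀ i j, i + j * k = s → a i ≠ 0 → (f j).natDegree ≤ n) :
    (∑ ij ∈ range (s + 1) ×ˢ range (s + 1),
      if ij.1 + ij.2 * k = s then C (a ij.1) * f ij.2 else 0).natDegree ≤ n := by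
  refine natDegree_sum_le_of_forall_le _ _ fun ij _ => ?_
  split_ifs with hij
  · by_cases ha : a ij.1 = 0
    · simp [ha]
    · exact natDegree_C_mul_le _ _ |>.trans (h _ _ hij ha)
  · simp

lemma lt_of_add_mul_eq {i j k s : ℕ} (hk : 2 ≤ k) (hs : 1 ≤ s) (h : i + j * k = s) : j < s := by
  nlinarith

lemma lt_of_pos_add_mul_eq {i j k s T : ℕ} (hi : 1 ≤ i) (h : i + j * k = s)
    (hs : s < k * T + 1) : j < T :=
  Nat.lt_of_mul_lt_mul_right (a := k) (by rw [mul_comm T]; omega)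

theorem degree_in_t_le_general
    {q : ℕ} (F : Type) [Field F] [Fintype F] (hF : Fintype.card F = q)
    (γ δ : ℕ → Polynomial F) (hδ0 : δ 0 = 0)
    (c : ℕ → Polynomial (Polynomial F)) (hc0 : c 0 = 1)
    (hc : ∀ s, 1 ≤ s → c s =
      (∑ ij ∈ Finset.range (s + 1) ×ˢ Finset.range (s + 1),
        if ij.1 + ij.2 * q = s then C (γ ij.1) * subst F q 0 1 (c ij.2) else 0) +
      (X - C (X ^ q)) *
      (∑ ij ∈ Finset.range (s + 1) ×ˢ Finset.range (s + 1),
        if ij.1 + ij.2 * q ^ 2 = s then C (δ ij.1) * subst F q 0 2 (c ij.2) else 0)) :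
    ∀ s l : ℕ, s < ∑ m ∈ Finset.range (l + 1), q ^ (2 * m) → (c s).natDegree ≤ l := by
  have hq : 2 ≤ q := hF ▸ Fintype.one_lt_card
  simp_rw [pow_mul]
  intro s
  induction s using Nat.strong_induction_on with
  | _ s ih =>
    intro l hs
    rcases Nat.eq_zero_or_pos s with rfl | hs1
    · simp [hc0]
    obtain _ | l := l
    · simp at hs; omega
    have hS : ∑ m ∈ range (l + 2), (q ^ 2) ^ m = q ^ 2 * ∑ m ∈ range (l + 1), (q ^ 2) ^ m + 1 :=
      geom_sum_succ
    rw [hc s hs1]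
    refine natDegree_add_le_of_degree_le ?_ ?_
    · refine natDegree_sum_ite_C_mul_le (a := γ) (f := fun j => subst F q 0 1 (c j))
        fun i j hij _ => (natDegree_subst_zero_le F q 1 _).trans ?_
      have hjs := lt_of_add_mul_eq hq hs1 hij
      exact ih j hjs (l + 1) (hjs.trans hs)
    · have hq2 : 2 ≤ q ^ 2 := by nlinarith
      refine natDegree_mul_le.trans <|
        (add_le_add (natDegree_X_sub_C_le _) ?_).trans_eq (add_comm 1 l)
      refine natDegree_sum_ite_C_mul_le (a := δ) (f := fun j => subst F q 0 2 (c j))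
        fun i j hij hδi => (natDegree_subst_zero_le F q 2 _).trans ?_
      have hi : 1 ≤ i := Nat.pos_of_ne_zero (by rintro rfl; exact hδi hδ0)
      exact ih j (lt_of_add_mul_eq hq2 hs1 hij) l (lt_of_pos_add_mul_eq hi hij (hS ▸ hs))

/-- Let `c : ℕ → R` satisfy `c 0 = 1` and, for `s ≥ 1`, the recursion
`c s = Σ_{i+jq=s} γ_i · c_j(t,θ^q) + (t − θ^q) · Σ_{i+jq²=s} δ_i · c_j(t,θ^{q²})`, where
`γ, δ : ℕ → 𝔽_q[θ]` with `γ_0 = 1`, `δ_0 = 0`, `δ_1 = −1`. Then for all `s, l ≥ 0` with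
`s < 1 + q² + ⋯ + q^{2l}`, the degree in `t` of `c s` is at most `l`. -/
theorem degree_in_t_le
    {p : ℕ} (hp : p.Prime) {e : ℕ} (he : 1 ≤ e) {q : ℕ} (hq : q = p ^ e)
    (F : Type) [Field F] [Fintype F] (hF : Fintype.card F = q)
    (γ δ : ℕ → Polynomial F) (hγ0 : γ 0 = 1) (hδ0 : δ 0 = 0) (hδ1 : δ 1 = -1)
    (c : ℕ → Polynomial (Polynomial F)) (hc0 : c 0 = 1)
    (hc : ∀ s, 1 ≤ s → c s =
      (∑ ij ∈ Finset.range (s + 1) ×ˢ Finset.range (s + 1),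
        if ij.1 + ij.2 * q = s then C (γ ij.1) * subst F q 0 1 (c ij.2) else 0) +
      (X - C (X ^ q)) *
      (∑ ij ∈ Finset.range (s + 1) ×ˢ Finset.range (s + 1),
        if ij.1 + ij.2 * q ^ 2 = s then C (δ ij.1) * subst F q 0 2 (c ij.2) else 0)) :
    ∀ s l : ℕ, s < ∑ m ∈ Finset.range (l + 1), q ^ (2 * m) → (c s).natDegree ≤ l :=
  degree_in_t_le_general F hF γ δ hδ0 c hc0 hc
end

section
/- Let K be a field, q ≥ 1 an integer, k ≥ 1, and p_1,…,p_k ∈ K[t]. For a polynomial p ∈ K[t], let p(t^{q^{i−1}}) denote its image under the K-algebra endomorphism of K[t] sending t to t^{q^{i−1}}. Suppose det((p_j(t^{q^{i−1}}))_{1≤i,j≤k}) ≠ 0. Let (i_1,…,i_k) be a permutation of {1,…,k} such that deg p_{i_1} ≤ deg p_{i_2} ≤ ⋯ ≤ deg p_{i_k}. Then deg p_{i_l} ≥ l − 1 for every 1 ≤ l ≤ k. -/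
/-!
A `K`-linear relation among the `p_j` survives every substitution `t ↦ t ^ q ^ i`, so it would
be a relation among the columns of the matrix; hence the `p_j` are linearly independent over `K`.
If `deg p_{i_l} < l - 1`, then `p_{i_1}, …, p_{i_l}` are `l` independent polynomials in the
`(l - 1)`-dimensional space of polynomials of degree `< l - 1`, which is impossible.
-/

open Polynomial

theorem Polynomial.card_le_of_linearIndependent_of_mem_degreeLT {R ι : Type*} [Ring R]
    [StrongRankCondition R] [Fintype ι] {n : ℕ} {v : ι → R[X]} (hv : LinearIndependent R v)
    (hdeg : ∀ i, v i ∈ degreeLT R n) : Fintype.card ι ≤ n := by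
  have hv' : LinearIndependent R (fun i => (⟨v i, hdeg i⟩ : degreeLT R n)) :=
    .of_comp (degreeLT R n).subtype hv
  simpa [Module.finrank_eq_card_basis (degreeLT.basis R n)] using hv'.fintype_card_le_finrank

theorem LinearIndependent.of_det_ne_zero {K R M ι : Type*} [CommRing K] [CommRing R]
    [IsDomain R] [Algebra K R] [FaithfulSMul K R] [AddCommGroup M] [Module K M] [Fintype ι]
    [DecidableEq ι] (f : ι → M →ₗ[K] R) (v : ι → M)
    (hdet : (Matrix.of fun i j => f i (v j)).det ≠ 0) : LinearIndependent K v :=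
  .of_comp (LinearMap.pi f)
    ((Matrix.linearIndependent_cols_of_det_ne_zero hdet).restrict_scalars' K)

theorem degrees_grow_of_det_ne_zero_general
    (K : Type*) [Field K] (q : ℕ) (k : ℕ)
    (P : Fin k → Polynomial K)
    (hdet : Matrix.det (Matrix.of fun i j : Fin k =>
        Polynomial.aeval ((X : Polynomial K) ^ q ^ (i : ℕ)) (P j)) ≠ 0)
    (σ : Equiv.Perm (Fin k))
    (hσ : ∀ l l' : Fin k, l ≤ l' → (P (σ l)).natDegree ≤ (P (σ l')).natDegree) :
    ∀ l : Fin k, (l : ℕ) ≤ (P (σ l)).natDegree := by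
  intro l
  by_contra! hl
  have hP : LinearIndependent K P :=
    .of_det_ne_zero (fun i : Fin k => (aeval ((X : K[X]) ^ q ^ (i : ℕ))).toLinearMap) P hdet
  let first : Fin (l + 1) → Fin k := σ ∘ Fin.castLE l.isLt
  have hdeg : ∀ j, P (first j) ∈ degreeLT K l := fun j =>
    mem_degreeLT.mpr <| degree_le_natDegree.trans_lt <| WithBot.coe_lt_coe.mpr <|
      (hσ _ l (Fin.le_def.mpr (Nat.lt_succ_iff.mp j.isLt))).trans_lt hl
  have hcard := card_le_of_linearIndependent_of_mem_degreeLT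
    (hP.comp first (σ.injective.comp (Fin.castLE_injective _))) hdeg
  simp at hcard

/-- Let `K` be a field, `q ≥ 1`, and `p_1,…,p_k ∈ K[t]`. If the twisted
determinant `det((p_j(t^{q^{i−1}})))` is non-zero and `(i_1,…,i_k)` (here: a permutation `σ`
of `Fin k`) orders the `p_j` by non-decreasing degree, then `deg p_{i_l} ≥ l − 1` for all
`l`, i.e. `natDegree (p (σ l)) ≥ l` for `l : Fin k`. -/
theorem degrees_grow_of_det_ne_zero
    (K : Type*) [Field K] (q : ℕ) (hq : 1 ≤ q) (k : ℕ) (hk : 1 ≤ k)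
    (P : Fin k → Polynomial K)
    (hdet : Matrix.det (Matrix.of fun i j : Fin k =>
        Polynomial.aeval ((X : Polynomial K) ^ q ^ (i : ℕ)) (P j)) ≠ 0)
    (σ : Equiv.Perm (Fin k))
    (hσ : ∀ l l' : Fin k, l ≤ l' → (P (σ l)).natDegree ≤ (P (σ l')).natDegree) :
    ∀ l : Fin k, (l : ℕ) ≤ (P (σ l)).natDegree :=
  degrees_grow_of_det_ne_zero_general K q k P hdet σ hσ
end

section
/- Let f = Σ_{s≥0} c_s v^s ∈ R[[v]] with c_s ∈ R. Then for all k ≥ 1 and n ≥ 0, the coefficient of v^n in H_k(f) equals Σ_{‖s‖=n} det((c_{s_j}(t^{q^{i−1}}, θ^{q^{j−1}}))_{1≤i,j≤k}), the (finite) sum ranging over all k-tuples s = (s_1,…,s_k) of non-negative integers with ‖s‖ := Σ_{i=1}^k s_i q^{i−1} = n. -/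
open Polynomial

/-!
Expanding the determinant, the coefficient of `v^n` in `H_k(f)` is the sum, over all ways of
writing `n = l_1 + ⋯ + l_k`, of the determinant of the `v^{l_j}`-coefficients of the `j`-th
columns. The `j`-th column `χ^{i-1} τ^{j-1} f` only has coefficients in degrees divisible by
`q^{j-1}`, its `v^{s q^{j-1}}`-coefficient being `c_s(t^{q^{i-1}}, θ^{q^{j-1}})`. So only the
decompositions `l_j = s_j q^{j-1}` contribute, and they are exactly the tuples with `‖s‖ = n`.
-/

theorem PowerSeries.coeff_det {A ι : Type*} [CommRing A] [Fintype ι] [DecidableEq ι] (n : ℕ)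
    (M : Matrix ι ι (PowerSeries A)) :
    coeff n M.det =
      ∑ l ∈ Finset.finsuppAntidiag Finset.univ n,
        Matrix.det (Matrix.of fun a b => coeff (l b) (M a b)) := by
  simp only [Matrix.det_apply, Matrix.of_apply, map_sum, Units.smul_def, map_zsmul,
    PowerSeries.coeff_prod, Finset.smul_sum]
  rw [Finset.sum_comm]

theorem Matrix.det_of_ite_col {R ι : Type*} [CommRing R] [Fintype ι] [DecidableEq ι]
    (P : ι → Prop) [DecidablePred P] (A : ι → ι → R) :
    Matrix.det (Matrix.of fun a b => if P b then A a b else 0) =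
      if ∀ b, P b then (Matrix.of A).det else 0 := by
  split_ifs with hP
  · congr 1
    ext a b
    simp [hP b]
  · obtain ⟨b, hb⟩ := not_forall.mp hP
    exact Matrix.det_eq_zero_of_column_eq_zero b fun a => by simp [hb]

theorem Finset.sum_finsuppAntidiag_dvd_eq_sum_fin {ι M : Type*} [Fintype ι] [DecidableEq ι]
    [AddCommMonoid M] (w : ι → ℕ) (hw : ∀ i, 0 < w i) (n : ℕ) (G : (ι → ℕ) → M) :
    ∑ l ∈ finsuppAntidiag univ n, (if ∀ i, w i ∣ l i then G (fun i => l i / w i) else 0) =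
      ∑ s : ι → Fin (n + 1), if ∑ i, (s i : ℕ) * w i = n then G (fun i => s i) else 0 := by
  rw [← sum_filter, ← sum_filter]
  refine sum_bij' (fun l hl i => ⟨l i / w i, ?_⟩)
    (fun s _ => Finsupp.equivFunOnFinite.symm fun i => (s i : ℕ) * w i) ?_ ?_ ?_ ?_ ?_
  · simp only [mem_filter, mem_finsuppAntidiag] at hl
    have hle : l i ≤ n := hl.1.1 ▸ single_le_sum (fun j _ => Nat.zero_le (l j)) (mem_univ i)
    exact Nat.lt_succ_of_le ((Nat.div_le_self _ _).trans hle)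
  · intro l hl
    simp only [mem_filter, mem_finsuppAntidiag] at hl ⊢
    refine ⟨mem_univ _, ?_⟩
    rw [← hl.1.1]
    exact sum_congr rfl fun i _ => Nat.div_mul_cancel (hl.2 i)
  · intro s hs
    simp only [mem_filter, mem_univ, true_and] at hs
    simp only [mem_filter, mem_finsuppAntidiag, Finsupp.coe_equivFunOnFinite_symm]
    exact ⟨⟨hs, fun i _ => mem_univ i⟩, fun i => dvd_mul_left _ _⟩
  · intro l hl
    simp only [mem_filter] at hl
    ext i
    exact Nat.div_mul_cancel (hl.2 i)
  · intro s _
    funext i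
    exact Fin.ext (Nat.mul_div_cancel _ (hw i))
  · intro l _
    rfl

section Substitution

variable (F : Type) [Field F] (q : ℕ)

theorem subst_C (a b : ℕ) (r : Polynomial F) :
    subst F q a b (C r) = C (aeval ((X : Polynomial F) ^ q ^ b) r) := by
  simp [subst]

theorem subst_X (a b : ℕ) : subst F q a b X = X ^ q ^ a := by
  simp [subst]

theorem subst_comp (a b a' b' : ℕ) :
    (subst F q a b).comp (subst F q a' b') = subst F q (a + a') (b + b') := by
  refine ringHom_ext (fun r => ?_) ?_
  · simp only [RingHom.comp_apply, subst_C]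
    congr 1
    have h : (aeval ((X : Polynomial F) ^ q ^ b)).comp (aeval ((X : Polynomial F) ^ q ^ b')) =
        aeval ((X : Polynomial F) ^ q ^ (b + b')) := by
      apply algHom_ext
      simp [← pow_mul, ← pow_add]
    exact DFunLike.congr_fun h r
  · simp only [RingHom.comp_apply, subst_X, map_pow, ← pow_mul, ← pow_add]

theorem subst_subst (a b a' b' : ℕ) (P : Polynomial (Polynomial F)) :
    subst F q a b (subst F q a' b' P) = subst F q (a + a') (b + b') P := by
  rw [← subst_comp, RingHom.comp_apply]

theorem subst_zero_zero : subst F q 0 0 = RingHom.id _ :=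
  ringHom_ext (fun r => by simp [subst_C]) (by simp [subst_X])

theorem coeff_iterate_tauP (c : ℕ → Polynomial (Polynomial F)) (j m : ℕ) :
    PowerSeries.coeff m ((tauP F q)^[j] (PowerSeries.mk c)) =
      if q ^ j ∣ m then subst F q 0 j (c (m / q ^ j)) else 0 := by
  induction j generalizing m with
  | zero => simp [subst_zero_zero]
  | succ j ih =>
    rw [Function.iterate_succ_apply', tauP, PowerSeries.coeff_mk]
    by_cases hq : q ∣ m
    · have hdvd : q ^ j ∣ m / q ↔ q ^ (j + 1) ∣ m := by
        rw [pow_succ', Nat.dvd_div_iff_mul_dvd hq]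
      rw [if_pos hq, ih]
      simp only [hdvd]
      split_ifs
      · rw [subst_subst, Nat.div_div_eq_div_mul, ← pow_succ', zero_add, add_comm 1]
      · exact map_zero _
    · rw [if_neg hq, if_neg fun h => hq ((dvd_pow_self q j.succ_ne_zero).trans h)]

theorem coeff_iterate_chiP (g : PowerSeries (Polynomial (Polynomial F))) (i m : ℕ) :
    PowerSeries.coeff m ((chiP F q)^[i] g) = subst F q i 0 (PowerSeries.coeff m g) := by
  induction i with
  | zero => simp [subst_zero_zero]
  | succ i ih =>
    rw [Function.iterate_succ_apply', chiP, PowerSeries.coeff_mk, ih, subst_subst, add_comm]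

theorem coeff_iterate_chiP_iterate_tauP (c : ℕ → Polynomial (Polynomial F)) (i j m : ℕ) :
    PowerSeries.coeff m ((chiP F q)^[i] ((tauP F q)^[j] (PowerSeries.mk c))) =
      if q ^ j ∣ m then subst F q i j (c (m / q ^ j)) else 0 := by
  rw [coeff_iterate_chiP, coeff_iterate_tauP, apply_ite (subst F q i 0), map_zero, subst_subst,
    add_zero, zero_add]

end Substitution

theorem hankel_coeff_eq_sum_dets_general
    {p : ℕ} (hp : p.Prime) {e : ℕ} {q : ℕ} (hq : q = p ^ e)
    (F : Type) [Field F]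
    (c : ℕ → Polynomial (Polynomial F)) (k : ℕ) (n : ℕ) :
    PowerSeries.coeff n
        (Matrix.det (Matrix.of fun i j : Fin k =>
          (chiP F q)^[(i : ℕ)] ((tauP F q)^[(j : ℕ)] (PowerSeries.mk c)))) =
      ∑ s : Fin k → Fin (n + 1),
        if (∑ i : Fin k, (s i : ℕ) * q ^ (i : ℕ)) = n then
          Matrix.det (Matrix.of fun i j : Fin k =>
            subst F q (i : ℕ) (j : ℕ) (c ((s j : ℕ))))
        else 0 := by
  have hq_pos : 0 < q := hq ▸ pow_pos hp.pos e
  simp only [PowerSeries.coeff_det, Matrix.of_apply, coeff_iterate_chiP_iterate_tauP,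
    Matrix.det_of_ite_col]
  exact Finset.sum_finsuppAntidiag_dvd_eq_sum_fin (fun i : Fin k => q ^ (i : ℕ))
    (fun i => pow_pos hq_pos _) n
    (fun s => Matrix.det (Matrix.of fun i j : Fin k => subst F q i j (c (s j))))

/-- Let `f = Σ c_s v^s ∈ R[[v]]`. For all `k ≥ 1` and `n ≥ 0`, the
coefficient of `v^n` in `H_k(f) = det((χ^{i−1}τ^{j−1} f))` equals the finite sum
`Σ_{‖s‖=n} det((c_{s_j}(t^{q^{i−1}}, θ^{q^{j−1}}))_{1≤i,j≤k})`, over all `k`-tuples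
`s` of non-negative integers with `‖s‖ = Σ_i s_i q^{i−1} = n` (each such `s_i ≤ n`, so the
tuples are sampled from `Fin (n+1)`). -/
theorem hankel_coeff_eq_sum_dets
    {p : ℕ} (hp : p.Prime) {e : ℕ} (he : 1 ≤ e) {q : ℕ} (hq : q = p ^ e)
    (F : Type) [Field F] [Fintype F] (hF : Fintype.card F = q)
    (c : ℕ → Polynomial (Polynomial F)) (k : ℕ) (hk : 1 ≤ k) (n : ℕ) :
    PowerSeries.coeff n
        (Matrix.det (Matrix.of fun i j : Fin k =>
          (chiP F q)^[(i : ℕ)] ((tauP F q)^[(j : ℕ)] (PowerSeries.mk c)))) =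
      ∑ s : Fin k → Fin (n + 1),
        if (∑ i : Fin k, (s i : ℕ) * q ^ (i : ℕ)) = n then
          Matrix.det (Matrix.of fun i j : Fin k =>
            subst F q (i : ℕ) (j : ℕ) (c ((s j : ℕ))))
        else 0 :=
  hankel_coeff_eq_sum_dets_general hp hq F c k n
end
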